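/- If for every i = 1, ..., n it holds that max_{k ≠ i} μ(X^i, X^k) < r_i², then for every data point x_j the representation produced by OMP(X_{-j}, x_j) with ε = 0 and k_max = N − 1 is subspace preserving. -/

import Mathlib

/-!
OMP run on `x_j ∈ S_i` keeps its residual in `S_i` as long as every greedy step selects a point
of `S_i`. Let `w ∈ S_i` be a unit residual direction and `ρ = r(P^i_{-j}) ≥ r_i`. The inscribed
ball of radius `ρ` contains `ρ w`, and a functional `|⟪u, ·⟫|` is bounded on `P^i_{-j}` by its
maximum on `X^i_{-j}`; hence `ρ ≤ max_m |⟪x_m, w⟫|` over `X^i_{-j}`, and `ρ |⟪x_l, w⟫| ≤ μ` for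
`x_l` in another subspace. If `|⟪x_l, w⟫|` were at least that maximum, then
`ρ² ≤ μ < r_i² ≤ ρ²`.
-/

open scoped RealInnerProductSpace Classical

noncomputable section

namespace SSCOMP

variable {D : ℕ}

noncomputable def ompSelect {ι : Type*} [Fintype ι] [LinearOrder ι] [Nonempty ι]
    (a : ι → EuclideanSpace ℝ (Fin D)) (q : EuclideanSpace ℝ (Fin D)) : ι :=
  (Finset.univ.filter fun i => ∀ m, |⟪a m, q⟫| ≤ |⟪a i, q⟫|).min' (by
    obtain ⟨i, -, hi⟩ := Finset.exists_max_image (Finset.univ : Finset ι)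
      (fun m => |⟪a m, q⟫|) Finset.univ_nonempty
    exact ⟨i, Finset.mem_filter.mpr ⟨Finset.mem_univ i, fun m => hi m (Finset.mem_univ m)⟩⟩)

noncomputable def ompState {ι : Type*} [Fintype ι] [LinearOrder ι]
    (a : ι → EuclideanSpace ℝ (Fin D)) (b : EuclideanSpace ℝ (Fin D)) :
    ℕ → Finset ι × EuclideanSpace ℝ (Fin D)
  | 0 => (∅, b)
  | k + 1 =>
    let s := ompState a b k
    if s.2 = 0 then s
    else if h : Nonempty ι then
      haveI := h
      let T' : Finset ι := insert (ompSelect a s.2) s.1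
      (T', b - (Submodule.orthogonalProjection (Submodule.span ℝ (a '' (T' : Set ι))) b :
        EuclideanSpace ℝ (Fin D)))
    else s

noncomputable def ompSupport {ι : Type*} [Fintype ι] [LinearOrder ι]
    (a : ι → EuclideanSpace ℝ (Fin D)) (b : EuclideanSpace ℝ (Fin D)) (k : ℕ) : Finset ι :=
  (ompState a b k).1

noncomputable def ompResidual {ι : Type*} [Fintype ι] [LinearOrder ι]
    (a : ι → EuclideanSpace ℝ (Fin D)) (b : EuclideanSpace ℝ (Fin D)) (k : ℕ) :
    EuclideanSpace ℝ (Fin D) :=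
  (ompState a b k).2

def IsOMPOutput {ι : Type*} [Fintype ι] [LinearOrder ι]
    (a : ι → EuclideanSpace ℝ (Fin D)) (b : EuclideanSpace ℝ (Fin D)) (kmax : ℕ)
    (c : ι → ℝ) : Prop :=
  (∀ m, c m ≠ 0 → m ∈ ompSupport a b kmax) ∧
  ∀ c' : ι → ℝ, (∀ m, c' m ≠ 0 → m ∈ ompSupport a b kmax) →
    ‖b - ∑ m, c m • a m‖ ≤ ‖b - ∑ m, c' m • a m‖

noncomputable def residualDirs {ι : Type*} [Fintype ι] [LinearOrder ι]
    (a : ι → EuclideanSpace ℝ (Fin D)) (b : EuclideanSpace ℝ (Fin D)) :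
    Set (EuclideanSpace ℝ (Fin D)) :=
  {w | ∃ k, ompResidual a b k ≠ 0 ∧ w = ‖ompResidual a b k‖⁻¹ • ompResidual a b k}

noncomputable def coherence (A B : Set (EuclideanSpace ℝ (Fin D))) : ℝ :=
  sSup {r : ℝ | ∃ u ∈ A, ∃ v ∈ B, r = |⟪u, v⟫|}

/-- `conv(±A)` -/
noncomputable def symmHull (A : Set (EuclideanSpace ℝ (Fin D))) :
    Set (EuclideanSpace ℝ (Fin D)) :=
  convexHull ℝ (A ∪ (-A))

/-- Balls are taken within the linear span of the body. -/
noncomputable def inradius (P : Set (EuclideanSpace ℝ (Fin D))) : ℝ :=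
  sSup {r : ℝ | 0 ≤ r ∧ ∃ c ∈ Submodule.span ℝ P,
    ∀ y ∈ Submodule.span ℝ P, ‖y - c‖ ≤ r → y ∈ P}

variable {n N : ℕ}

/-- `X^i` -/
noncomputable def subX (S : Fin n → Submodule ℝ (EuclideanSpace ℝ (Fin D)))
    (x : Fin N → EuclideanSpace ℝ (Fin D)) (i : Fin n) : Set (EuclideanSpace ℝ (Fin D)) :=
  x '' {m | x m ∈ S i}

/-- `X^i_{-j}` -/
noncomputable def subXmin (S : Fin n → Submodule ℝ (EuclideanSpace ℝ (Fin D)))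
    (x : Fin N → EuclideanSpace ℝ (Fin D)) (i : Fin n) (j : Fin N) :
    Set (EuclideanSpace ℝ (Fin D)) :=
  x '' {m | x m ∈ S i ∧ m ≠ j}

noncomputable def Wji (S : Fin n → Submodule ℝ (EuclideanSpace ℝ (Fin D)))
    (x : Fin N → EuclideanSpace ℝ (Fin D)) (i : Fin n) (j : Fin N) :
    Set (EuclideanSpace ℝ (Fin D)) :=
  residualDirs (fun m : {m : Fin N // x m ∈ S i ∧ m ≠ j} => x m.1) (x j)

noncomputable def Wfull (S : Fin n → Submodule ℝ (EuclideanSpace ℝ (Fin D)))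
    (x : Fin N → EuclideanSpace ℝ (Fin D)) (i : Fin n) : Set (EuclideanSpace ℝ (Fin D)) :=
  ⋃ j ∈ {j : Fin N | x j ∈ S i}, Wji S x i j

/-- `r_i` -/
noncomputable def rMin (S : Fin n → Submodule ℝ (EuclideanSpace ℝ (Fin D)))
    (x : Fin N → EuclideanSpace ℝ (Fin D)) (i : Fin n) : ℝ :=
  sInf {r : ℝ | ∃ j, x j ∈ S i ∧ r = inradius (symmHull (subXmin S x i j))}

noncomputable def cosAngle (Si Sk : Submodule ℝ (EuclideanSpace ℝ (Fin D))) : ℝ :=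
  sSup {r : ℝ | ∃ u ∈ Si, ∃ v ∈ Sk, ‖u‖ = 1 ∧ ‖v‖ = 1 ∧ r = ⟪u, v⟫}

section Omp

variable {ι : Type*} [Fintype ι] [LinearOrder ι] (a : ι → EuclideanSpace ℝ (Fin D))

theorem abs_inner_le_abs_inner_ompSelect [Nonempty ι] (q : EuclideanSpace ℝ (Fin D)) (m : ι) :
    |⟪a m, q⟫| ≤ |⟪a (ompSelect a q), q⟫| := by
  unfold ompSelect
  exact (Finset.mem_filter.mp
    (Finset.min'_mem (Finset.univ.filter fun i => ∀ m, |⟪a m, q⟫| ≤ |⟪a i, q⟫|) _)).2 m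

theorem ompSelect_mem [Nonempty ι] {V : Submodule ℝ (EuclideanSpace ℝ (Fin D))}
    {q : EuclideanSpace ℝ (Fin D)} (h : ∀ l, a l ∉ V → ∃ m, |⟪a l, q⟫| < |⟪a m, q⟫|) :
    a (ompSelect a q) ∈ V := by
  by_contra hsel
  obtain ⟨m, hm⟩ := h _ hsel
  exact (abs_inner_le_abs_inner_ompSelect a q m).not_gt hm

theorem ompSupport_mem_and_ompResidual_mem {V : Submodule ℝ (EuclideanSpace ℝ (Fin D))}
    {b : EuclideanSpace ℝ (Fin D)} (hb : b ∈ V)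
    (hV : ∀ q ∈ V, q ≠ 0 → ∀ l, a l ∉ V → ∃ m, |⟪a l, q⟫| < |⟪a m, q⟫|) (k : ℕ) :
    (∀ m ∈ ompSupport a b k, a m ∈ V) ∧ ompResidual a b k ∈ V := by
  induction k with
  | zero => simpa [ompSupport, ompResidual, ompState] using hb
  | succ k ih =>
    obtain ⟨hT, hq⟩ := ih
    simp only [ompSupport, ompResidual] at hT hq ⊢
    rw [ompState]
    split_ifs with h0
    · exact ⟨hT, hq⟩
    · have hT' : ∀ m ∈ insert (ompSelect a (ompState a b k).2) (ompState a b k).1, a m ∈ V :=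
        Finset.forall_mem_insert _ _ _ |>.mpr ⟨ompSelect_mem a (hV _ hq h0), hT⟩
      refine ⟨hT', V.sub_mem hb (Submodule.span_le.mpr ?_ (Submodule.coe_mem _))⟩
      rintro _ ⟨m, hm, rfl⟩
      exact hT' m hm
    · exact ⟨hT, hq⟩

end Omp

section Inradius

variable {A : Set (EuclideanSpace ℝ (Fin D))}

theorem inradius_nonneg (P : Set (EuclideanSpace ℝ (Fin D))) : 0 ≤ inradius P :=
  Real.sSup_nonneg fun _ hr => hr.1

theorem span_symmHull (A : Set (EuclideanSpace ℝ (Fin D))) :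
    Submodule.span ℝ (symmHull A) = Submodule.span ℝ A := by
  refine le_antisymm ?_
    (Submodule.span_mono (subset_convexHull ℝ _ |>.trans' Set.subset_union_left))
  rw [Submodule.span_le]
  refine convexHull_min ?_ (Submodule.span ℝ A).convex
  rintro p (hp | hp)
  · exact Submodule.subset_span hp
  · simpa using Submodule.neg_mem _ (Submodule.subset_span (s := A) hp)

theorem neg_mem_symmHull {p : EuclideanSpace ℝ (Fin D)} (hp : p ∈ symmHull A) :
    -p ∈ symmHull A := by
  rw [symmHull, ← Set.neg_mem_neg, ← convexHull_neg, Set.union_neg, neg_neg, Set.union_comm,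
    neg_neg]
  exact hp

theorem smul_mem_symmHull {w c : EuclideanSpace ℝ (Fin D)} {r : ℝ}
    (hw : w ∈ Submodule.span ℝ A) (hw1 : ‖w‖ ≤ 1) (hr : 0 ≤ r)
    (hc : c ∈ Submodule.span ℝ (symmHull A))
    (hball : ∀ y ∈ Submodule.span ℝ (symmHull A), ‖y - c‖ ≤ r → y ∈ symmHull A) :
    r • w ∈ symmHull A := by
  rw [← span_symmHull] at hw
  have hrw : ‖r • w‖ ≤ r := by
    rw [norm_smul, Real.norm_of_nonneg hr]
    exact mul_le_of_le_one_right hr hw1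
  have hplus : c + r • w ∈ symmHull A :=
    hball _ (add_mem hc (Submodule.smul_mem _ _ hw)) (by simpa using hrw)
  have hminus : r • w - c ∈ symmHull A := by
    rw [← neg_sub]
    exact neg_mem_symmHull (hball _ (sub_mem hc (Submodule.smul_mem _ _ hw)) (by simpa using hrw))
  have hmid := convex_convexHull ℝ _ hplus hminus (by norm_num : (0 : ℝ) ≤ 1 / 2)
    (by norm_num : (0 : ℝ) ≤ 1 / 2) (by norm_num)
  rwa [show (1 / 2 : ℝ) • (c + r • w) + (1 / 2 : ℝ) • (r • w - c) = r • w by module] at hmid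

theorem abs_inner_le_of_mem_symmHull {u p : EuclideanSpace ℝ (Fin D)} {M : ℝ}
    (hA : ∀ v ∈ A, |⟪u, v⟫| ≤ M) (hp : p ∈ symmHull A) : |⟪u, p⟫| ≤ M := by
  have hconv : Convex ℝ {q : EuclideanSpace ℝ (Fin D) | |⟪u, q⟫| ≤ M} := by
    simpa [Set.preimage, abs_le] using
      (convex_Icc (-M) M).linear_preimage (innerₛₗ ℝ u)
  refine convexHull_min ?_ hconv hp
  rintro v (hv | hv)
  · exact hA v hv
  · simpa [inner_neg_right] using hA (-v) hv

theorem inradius_mul_abs_inner_le {u w : EuclideanSpace ℝ (Fin D)} {M : ℝ}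
    (hA : ∀ v ∈ A, |⟪u, v⟫| ≤ M) (hM : 0 ≤ M)
    (hw : w ∈ Submodule.span ℝ A) (hw1 : ‖w‖ ≤ 1) :
    inradius (symmHull A) * |⟪u, w⟫| ≤ M := by
  rw [inradius, mul_comm, ← smul_eq_mul, ← Real.sSup_smul_of_nonneg (abs_nonneg _)]
  refine Real.sSup_le ?_ hM
  rintro _ ⟨r, ⟨hr, c, hc, hball⟩, rfl⟩
  have := abs_inner_le_of_mem_symmHull hA (smul_mem_symmHull hw hw1 hr hc hball)
  rwa [real_inner_smul_right, abs_mul, abs_of_nonneg hr, mul_comm] at this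

end Inradius

theorem coherence_nonneg (A B : Set (EuclideanSpace ℝ (Fin D))) : 0 ≤ coherence A B :=
  Real.sSup_nonneg (by rintro _ ⟨u, -, v, -, rfl⟩; exact abs_nonneg _)

theorem abs_inner_le_coherence {A B : Set (EuclideanSpace ℝ (Fin D))} (hA : A.Finite)
    (hB : B.Finite) {u v : EuclideanSpace ℝ (Fin D)} (hu : u ∈ A) (hv : v ∈ B) :
    |⟪u, v⟫| ≤ coherence A B := by
  refine le_csSup (((hA.prod hB).image fun p => |⟪p.1, p.2⟫|).subset ?_).bddAbove
    ⟨u, hu, v, hv, rfl⟩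
  rintro _ ⟨u, hu, v, hv, rfl⟩
  exact ⟨(u, v), ⟨hu, hv⟩, rfl⟩

section Subspaces

variable (S : Fin n → Submodule ℝ (EuclideanSpace ℝ (Fin D)))
  (x : Fin N → EuclideanSpace ℝ (Fin D))

theorem coherence_le_sSup_coherence {i k : Fin n} (hk : k ≠ i) :
    coherence (subX S x i) (subX S x k) ≤
      sSup {r : ℝ | ∃ k, k ≠ i ∧ r = coherence (subX S x i) (subX S x k)} := by
  refine le_csSup ?_ ⟨k, hk, rfl⟩
  refine ((Set.finite_range fun k => coherence (subX S x i) (subX S x k)).subset ?_).bddAbove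
  rintro _ ⟨k, -, rfl⟩
  exact ⟨k, rfl⟩

theorem rMin_nonneg (i : Fin n) : 0 ≤ rMin S x i :=
  Real.sInf_nonneg (by rintro _ ⟨j, -, rfl⟩; exact inradius_nonneg _)

theorem rMin_le_inradius {i : Fin n} {j : Fin N} (hj : x j ∈ S i) :
    rMin S x i ≤ inradius (symmHull (subXmin S x i j)) :=
  csInf_le ⟨0, by rintro _ ⟨j, -, rfl⟩; exact inradius_nonneg _⟩ ⟨j, hj, rfl⟩

end Subspaces

theorem exists_mem_abs_inner_gt_of_notMem
    {S : Fin n → Submodule ℝ (EuclideanSpace ℝ (Fin D))} {x : Fin N → EuclideanSpace ℝ (Fin D)}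
    (hmem : ∀ j, ∃ i, x j ∈ S i)
    (hrank : ∀ i, ∀ j, x j ∈ S i → Submodule.span ℝ (subXmin S x i j) = S i)
    (hcond : ∀ i : Fin n,
      sSup {r : ℝ | ∃ k, k ≠ i ∧ r = coherence (subX S x i) (subX S x k)} < (rMin S x i) ^ 2)
    {i : Fin n} {j l : Fin N} (hj : x j ∈ S i) (hl : x l ∉ S i)
    {w : EuclideanSpace ℝ (Fin D)} (hw : w ∈ S i) (hw1 : ‖w‖ = 1) :
    ∃ m, (x m ∈ S i ∧ m ≠ j) ∧ |⟪x l, w⟫| < |⟪x m, w⟫| := by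
  obtain ⟨k, hk⟩ := hmem l
  have hki : k ≠ i := by rintro rfl; exact hl hk
  have hwA : w ∈ Submodule.span ℝ (subXmin S x i j) := hrank i j hj ▸ hw
  set ρ := inradius (symmHull (subXmin S x i j))
  by_contra! hle
  have hρt : ρ ≤ |⟪x l, w⟫| := by
    have := inradius_mul_abs_inner_le (u := w)
      (by rintro _ ⟨m, hm, rfl⟩; rw [real_inner_comm]; exact hle m hm) (abs_nonneg _) hwA hw1.le
    rwa [real_inner_self_eq_norm_sq, hw1, one_pow, abs_one, mul_one] at this
  have hρμ : ρ * |⟪x l, w⟫| ≤ coherence (subX S x i) (subX S x k) :=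
    inradius_mul_abs_inner_le
      (by
        rintro _ ⟨m, hm, rfl⟩
        rw [real_inner_comm]
        exact abs_inner_le_coherence ((Set.toFinite _).image x) ((Set.toFinite _).image x)
          ⟨m, hm.1, rfl⟩ ⟨l, hk, rfl⟩)
      (coherence_nonneg _ _) hwA hw1.le
  have hρρ := mul_le_mul_of_nonneg_left hρt (inradius_nonneg _ : 0 ≤ ρ)
  have hrρ := mul_self_le_mul_self (rMin_nonneg S x i) (rMin_le_inradius S x hj)
  linarith [coherence_le_sSup_coherence S x hki, sq (rMin S x i) ▸ hcond i]

theorem sscOmp_coherence_lt_inradiusSq_subspacePreserving_general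
    {D n N : ℕ} (S : Fin n → Submodule ℝ (EuclideanSpace ℝ (Fin D)))
    (x : Fin N → EuclideanSpace ℝ (Fin D))
    (hmem : ∀ j, ∃ i, x j ∈ S i)
    (hrank : ∀ i, ∀ j, x j ∈ S i → Submodule.span ℝ (subXmin S x i j) = S i)
    (hcond : ∀ i : Fin n,
      sSup {r : ℝ | ∃ k, k ≠ i ∧ r = coherence (subX S x i) (subX S x k)} < (rMin S x i) ^ 2) :
    ∀ (j : Fin N) (i : Fin n), x j ∈ S i →
      ∀ c : {m : Fin N // m ≠ j} → ℝ,
        IsOMPOutput (fun m => x m.1) (x j) (N - 1) c →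
        ∀ m, c m ≠ 0 → x m.1 ∈ S i := by
  intro j i hj c hc m hcm
  have hsep : ∀ q ∈ S i, q ≠ 0 → ∀ l : {m : Fin N // m ≠ j}, x l.1 ∉ S i →
      ∃ m : {m : Fin N // m ≠ j}, |⟪x l.1, q⟫| < |⟪x m.1, q⟫| := by
    intro q hq hq0 l hl
    obtain ⟨m, ⟨-, hmj⟩, hlt⟩ := exists_mem_abs_inner_gt_of_notMem hmem hrank hcond hj hl
      (Submodule.smul_mem _ ‖q‖⁻¹ hq) (norm_smul_inv_norm hq0)
    refine ⟨⟨m, hmj⟩, ?_⟩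
    simpa only [real_inner_smul_right, abs_mul, abs_inv, abs_norm,
      mul_lt_mul_iff_right₀ (inv_pos.mpr (norm_pos_iff.mpr hq0))] using hlt
  exact (ompSupport_mem_and_ompResidual_mem _ hj hsep (N - 1)).1 m (hc.1 m hcm)

/-- **Corollary 1.** If for every `i` one has `max_{k ≠ i} μ(X^i, X^k) < r_i²`,
then for every data point the representation produced by OMP (with `ε = 0` and
`k_max = N − 1`) is subspace preserving. -/
theorem sscOmp_coherence_lt_inradiusSq_subspacePreserving
    {D n N : ℕ} (S : Fin n → Submodule ℝ (EuclideanSpace ℝ (Fin D)))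
    (x : Fin N → EuclideanSpace ℝ (Fin D))
    (hunit : ∀ j, ‖x j‖ = 1)
    (hmem : ∀ j, ∃ i, x j ∈ S i)
    (hrank : ∀ i, ∀ j, x j ∈ S i → Submodule.span ℝ (subXmin S x i j) = S i)
    (hcond : ∀ i : Fin n,
      sSup {r : ℝ | ∃ k, k ≠ i ∧ r = coherence (subX S x i) (subX S x k)} < (rMin S x i) ^ 2) :
    ∀ (j : Fin N) (i : Fin n), x j ∈ S i →
      ∀ c : {m : Fin N // m ≠ j} → ℝ,
        IsOMPOutput (fun m => x m.1) (x j) (N - 1) c →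
        ∀ m, c m ≠ 0 → x m.1 ∈ S i :=
  sscOmp_coherence_lt_inradiusSq_subspacePreserving_general S x hmem hrank hcond

end SSCOMP
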